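/- There exists a finite fundamental lattice in which the laws (Vi) and (Cl) are valid but (Nu) fails; in particular (Nu), (Vi), (Cl) form a non-redundant axiomatization: no two of the three imply the third over fundamental lattices. -/

import Mathlib

/-- A *fundamental negation* on a bounded lattice: antitone, semi-complementation,
double-negation introduction. A bounded lattice with such a negation is a
*fundamental lattice*. -/
class FNeg (L : Type*) [Lattice L] [BoundedOrder L] where
  neg : L → L
  neg_antitone : ∀ a b : L, a ≤ b → neg b ≤ neg a
  inf_neg : ∀ a : L, a ⊓ neg a = ⊥
  le_neg_neg : ∀ a : L, a ≤ neg (neg a)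

open FNeg

/-- The axiom (Ex). -/
def ExAx (L : Type*) [Lattice L] [BoundedOrder L] [FNeg L] : Prop :=
  ∀ a b c d e f : L,
    neg (a ⊓ ((b ⊓ c) ⊔ (b ⊓ d))) ⊓ a ⊓ (c ⊔ e) ⊓ neg (neg f) ≤
      neg (neg (a ⊓ f)) ⊓ ((a ⊓ c) ⊔ (a ⊓ e) ⊔ f) ⊓ ((b ⊓ (c ⊔ d)) ⊔ neg (b ⊓ (c ⊔ d)))

/-- The axiom (Nu). -/
def NuAx (L : Type*) [Lattice L] [BoundedOrder L] [FNeg L] : Prop :=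
  ∀ p q : L, neg (neg p) ⊓ neg (neg q) ≤ neg (neg (p ⊓ q))

/-- The axiom (Vi). -/
def ViAx (L : Type*) [Lattice L] [BoundedOrder L] [FNeg L] : Prop :=
  ∀ a c e f : L, a ⊓ (c ⊔ e) ⊓ neg (neg f) ≤ (a ⊓ c) ⊔ (a ⊓ e) ⊔ f

/-- The axiom (Cl). -/
def ClAx (L : Type*) [Lattice L] [BoundedOrder L] [FNeg L] : Prop :=
  ∀ a b c d : L, neg (a ⊓ ((b ⊓ c) ⊔ (b ⊓ d))) ⊓ a ≤ (b ⊓ (c ⊔ d)) ⊔ neg (b ⊓ (c ⊔ d))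

/-- The 8-element lattice with chains 0 < c < d < a < 1 and 0 < e < f < b < 1, and e < a. -/
inductive L8 : Type
  | z | c | d | e | f | a | b | o
deriving DecidableEq

instance : Fintype L8 :=
  ⟨{L8.z, L8.c, L8.d, L8.e, L8.f, L8.a, L8.b, L8.o}, fun x => by cases x <;> decide⟩

namespace L8

def ble : L8 → L8 → Bool
  | z, _ => true
  | _, o => true
  | c, d | c, a | d, a => true
  | e, f | e, b | f, b | e, a => true
  | x, y => x == y

instance : LE L8 := ⟨fun x y => ble x y = true⟩

instance : DecidableRel (fun x y : L8 => x ≤ y) :=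
  fun x y => inferInstanceAs (Decidable (ble x y = true))

def bsup (x y : L8) : L8 :=
  if ble x y then y else if ble y x then x else
  match x, y with
  | d, e | e, d | c, e | e, c => a
  | _, _ => o

def binf (x y : L8) : L8 :=
  if ble x y then x else if ble y x then y else
  match x, y with
  | a, b | b, a | a, f | f, a => e
  | _, _ => z

instance : Lattice L8 where
  le := (· ≤ ·)
  le_refl := by decide
  le_trans := by decide
  le_antisymm := by decide
  sup := bsup
  le_sup_left := by decide
  le_sup_right := by decide
  sup_le := by decide
  inf := binf
  inf_le_left := by decide
  inf_le_right := by decide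
  le_inf := by decide

instance : BoundedOrder L8 where
  top := o
  le_top := by decide
  bot := z
  bot_le := by decide

def bneg : L8 → L8
  | z => o | o => z | a => z | b => c | c => b | d => f | f => d | e => d

instance : FNeg L8 where
  neg := bneg
  neg_antitone := by decide
  inf_neg := by decide
  le_neg_neg := by decide

end L8

/-- A bundled fundamental lattice. -/
structure BFL where
  carrier : Type*
  [lat : Lattice carrier]
  [bdd : BoundedOrder carrier]
  [fneg : FNeg carrier]

attribute [instance] BFL.lat BFL.bdd BFL.fneg

/-- 7-element lattice: bottom z, four atoms c,d,m,w, their join s, top o. -/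
inductive K7 : Type
  | z | c | d | m | w | s | o
deriving DecidableEq

instance : Fintype K7 :=
  ⟨{K7.z, K7.c, K7.d, K7.m, K7.w, K7.s, K7.o}, fun x => by cases x <;> decide⟩

namespace K7

def ble : K7 → K7 → Bool
  | z, _ => true
  | _, o => true
  | c, s | d, s | m, s | w, s => true
  | x, y => x == y

instance : LE K7 := ⟨fun x y => ble x y = true⟩

instance : DecidableRel (fun x y : K7 => x ≤ y) :=
  fun x y => inferInstanceAs (Decidable (ble x y = true))

def bsup (x y : K7) : K7 :=
  if ble x y then y else if ble y x then x else
  match x, y with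
  | s, _ | _, s => o
  | _, _ => s

def binf (x y : K7) : K7 :=
  if ble x y then x else if ble y x then y else z

instance : Lattice K7 where
  le := (· ≤ ·)
  le_refl := by decide
  le_trans := by decide
  le_antisymm := by decide
  sup := bsup
  le_sup_left := by decide
  le_sup_right := by decide
  sup_le := by decide
  inf := binf
  inf_le_left := by decide
  inf_le_right := by decide
  le_inf := by decide

instance : BoundedOrder K7 where
  top := o
  le_top := by decide
  bot := z
  bot_le := by decide

def bneg : K7 → K7
  | z => o | o => z | s => z | c => m | m => c | d => w | w => d

instance : FNeg K7 where
  neg := bneg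
  neg_antitone := by decide
  inf_neg := by decide
  le_neg_neg := by decide

end K7

/-- N5 lattice: z < a < b < o, z < c < o. -/
inductive N5 : Type
  | z | a | b | c | o
deriving DecidableEq

instance : Fintype N5 :=
  ⟨{N5.z, N5.a, N5.b, N5.c, N5.o}, fun x => by cases x <;> decide⟩

namespace N5

def ble : N5 → N5 → Bool
  | z, _ => true
  | _, o => true
  | a, b => true
  | x, y => x == y

instance : LE N5 := ⟨fun x y => ble x y = true⟩

instance : DecidableRel (fun x y : N5 => x ≤ y) :=
  fun x y => inferInstanceAs (Decidable (ble x y = true))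

def bsup (x y : N5) : N5 :=
  if ble x y then y else if ble y x then x else o

def binf (x y : N5) : N5 :=
  if ble x y then x else if ble y x then y else z

instance : Lattice N5 where
  le := (· ≤ ·)
  le_refl := by decide
  le_trans := by decide
  le_antisymm := by decide
  sup := bsup
  le_sup_left := by decide
  le_sup_right := by decide
  sup_le := by decide
  inf := binf
  inf_le_left := by decide
  inf_le_right := by decide
  le_inf := by decide

instance : BoundedOrder N5 where
  top := o
  le_top := by decide
  bot := z
  bot_le := by decide

def bneg : N5 → N5
  | z => o | o => z | a => c | b => c | c => b

instance : FNeg N5 where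
  neg := bneg
  neg_antitone := by decide
  inf_neg := by decide
  le_neg_neg := by decide

end N5

section ULiftInstances
universe u
variable {L : Type} [Lattice L] [BoundedOrder L]

instance : Lattice (ULift.{u} L) where
  le x y := x.down ≤ y.down
  lt x y := x.down < y.down
  lt_iff_le_not_ge _ _ := lt_iff_le_not_ge
  le_refl _ := le_refl _
  le_trans _ _ _ := le_trans
  le_antisymm x y h h' := congrArg ULift.up (le_antisymm h h')
  sup x y := ⟨x.down ⊔ y.down⟩
  le_sup_left _ _ := le_sup_left
  le_sup_right _ _ := le_sup_right
  sup_le _ _ _ := sup_le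
  inf x y := ⟨x.down ⊓ y.down⟩
  inf_le_left _ _ := inf_le_left
  inf_le_right _ _ := inf_le_right
  le_inf _ _ _ := le_inf

instance : BoundedOrder (ULift.{u} L) where
  top := ⟨⊤⟩
  le_top _ := le_top
  bot := ⟨⊥⟩
  bot_le _ := bot_le

instance [FNeg L] : FNeg (ULift.{u} L) where
  neg x := ⟨neg x.down⟩
  neg_antitone _ _ h := FNeg.neg_antitone _ _ h
  inf_neg x := congrArg ULift.up (FNeg.inf_neg x.down)
  le_neg_neg x := FNeg.le_neg_neg x.down

variable [FNeg L]

theorem uliftNu (h : NuAx L) : NuAx (ULift.{u} L) := fun p q => h p.down q.down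
theorem uliftVi (h : ViAx L) : ViAx (ULift.{u} L) := fun a c e f => h a.down c.down e.down f.down
theorem uliftCl (h : ClAx L) : ClAx (ULift.{u} L) := fun a b c d => h a.down b.down c.down d.down
theorem uliftNotNu (h : ¬ NuAx L) : ¬ NuAx (ULift.{u} L) :=
  fun h' => h fun p q => h' ⟨p⟩ ⟨q⟩
theorem uliftNotVi (h : ¬ ViAx L) : ¬ ViAx (ULift.{u} L) :=
  fun h' => h fun a c e f => h' ⟨a⟩ ⟨c⟩ ⟨e⟩ ⟨f⟩
theorem uliftNotCl (h : ¬ ClAx L) : ¬ ClAx (ULift.{u} L) :=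
  fun h' => h fun a b c d => h' ⟨a⟩ ⟨b⟩ ⟨c⟩ ⟨d⟩

end ULiftInstances

theorem l8_vi : ViAx L8 := by unfold ViAx; decide
theorem l8_cl : ClAx L8 := by unfold ClAx; decide
theorem l8_not_nu : ¬ NuAx L8 := by unfold NuAx; decide
theorem k7_nu : NuAx K7 := by unfold NuAx; decide
theorem k7_vi : ViAx K7 := by unfold ViAx; decide
theorem k7_not_cl : ¬ ClAx K7 := by unfold ClAx; decide
theorem n5_nu : NuAx N5 := by unfold NuAx; decide
theorem n5_cl : ClAx N5 := by unfold ClAx; decide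
theorem n5_not_vi : ¬ ViAx N5 := by unfold ViAx; decide

open L8 in
theorem vi_cl_not_nu :
    (ViAx L8 ∧ ClAx L8 ∧ ¬ NuAx L8 ∧
      neg (neg a) ⊓ neg (neg b) = b ∧ neg (neg (a ⊓ b)) = f ∧ ¬ (b ≤ f)) ∧
    (∃ K : BFL, Finite K.carrier ∧ NuAx K.carrier ∧ ViAx K.carrier ∧ ¬ ClAx K.carrier) ∧
    (∃ K : BFL, Finite K.carrier ∧ NuAx K.carrier ∧ ClAx K.carrier ∧ ¬ ViAx K.carrier) ∧
    (∃ K : BFL, Finite K.carrier ∧ ViAx K.carrier ∧ ClAx K.carrier ∧ ¬ NuAx K.carrier) := by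
  refine ⟨⟨l8_vi, l8_cl, l8_not_nu, by decide, by decide, by decide⟩,
    ⟨⟨ULift K7⟩, Finite.of_fintype _, uliftNu k7_nu, uliftVi k7_vi, uliftNotCl k7_not_cl⟩,
    ⟨⟨ULift N5⟩, Finite.of_fintype _, uliftNu n5_nu, uliftCl n5_cl, uliftNotVi n5_not_vi⟩,
    ⟨⟨ULift L8⟩, Finite.of_fintype _, uliftVi l8_vi, uliftCl l8_cl, uliftNotNu l8_not_nu⟩⟩
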